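/- For w, ε > 0 let q_n = (ε/(w+2ε))^{|n|} √(w+2ε) for n ∈ ℤ and ρ = ε/w. Then: (i) for every n ≥ 0, q_{n+1}/q_n = ρ/(1+2ρ), which tends to 0 as ρ → 0; (ii) for every η > 0 there exists ρ₀ > 0 such that whenever w, ε > 0 satisfy 0 < ε/w < ρ₀, then for every n ∈ ℤ the quantity D_n = ε(q_{n+1} + q_{n−1} − 2 q_n) + q_n³ is nonzero and |w q_n / D_n − 1| ≤ η; i.e., (q_n) satisfies the stationary DNLS equation w q_n = ε(q_{n+1} + q_{n−1} − 2q_n) + q_n³ asymptotically as ρ → 0, uniformly in n. -/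
import Mathlib

open scoped BigOperators

noncomputable section

/-- The onsite sequence `q_n = (ε/(w+2ε))^{|n|} √(w+2ε)` for the DNLS with
nearest-neighbor coupling. -/
def qon (w ε : ℝ) (n : ℤ) : ℝ := (ε / (w + 2 * ε)) ^ n.natAbs * Real.sqrt (w + 2 * ε)

lemma qon_neg (w ε : ℝ) (n : ℤ) : qon w ε (-n) = qon w ε n := by
  simp [qon]

/-- pure algebra core, positive index case: `q_k = r^k t`, `n = m+1`. -/
lemma core_bound (r s t ε w : ℝ) (hs : 0 < s) (ht : t * t = s) (htpos : 0 < t)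
    (hε : ε = r * s) (hw : w = s - 2 * (r * s)) (hr0 : 0 < r) (hr1 : 2 * r < 1) (m : ℕ) :
    (ε * (r ^ (m + 2) * t + r ^ m * t - 2 * (r ^ (m + 1) * t)) + (r ^ (m + 1) * t) ^ 3 ≠ 0) ∧
    |w * (r ^ (m + 1) * t) /
        (ε * (r ^ (m + 2) * t + r ^ m * t - 2 * (r ^ (m + 1) * t)) + (r ^ (m + 1) * t) ^ 3)
      - 1| ≤ 8 * r ^ 2 := by
  have ha0 : 0 < r ^ m := pow_pos hr0 m
  have ha1 : r ^ m ≤ 1 := pow_le_one₀ hr0.le (by linarith)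
  set a := r ^ m with ha_def
  have h1 : r ^ (m + 1) = a * r := by rw [pow_succ]
  have h2 : r ^ (m + 2) = a * r * r := by rw [pow_succ, pow_succ]
  have hεpos : 0 < ε := hε ▸ mul_pos hr0 hs
  have hD : ε * (r ^ (m + 2) * t + r ^ m * t - 2 * (r ^ (m + 1) * t)) + (r ^ (m + 1) * t) ^ 3
      = t * a * (ε * (1 - r) ^ 2 + a ^ 2 * r ^ 3 * s) := by
    rw [h1, h2]
    have h3 : (a * r * t) ^ 3 = a ^ 3 * r ^ 3 * (t * t) * t := by ring
    rw [h3, ht]; ring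
  have hDpos : 0 < ε * (r ^ (m + 2) * t + r ^ m * t - 2 * (r ^ (m + 1) * t)) + (r ^ (m + 1) * t) ^ 3 := by
    rw [hD]
    have h3 : 0 < ε * (1 - r) ^ 2 + a ^ 2 * r ^ 3 * s := by
      have h4 : 0 < a ^ 2 * r ^ 3 * s := by positivity
      have h5 : 0 ≤ ε * (1 - r) ^ 2 := mul_nonneg hεpos.le (sq_nonneg _)
      linarith
    positivity
  refine ⟨ne_of_gt hDpos, ?_⟩
  rw [div_sub_one (ne_of_gt hDpos), abs_div, abs_of_pos hDpos, div_le_iff₀ hDpos]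
  rw [hD, h1]
  have hNum : w * (a * r * t) - t * a * (ε * (1 - r) ^ 2 + a ^ 2 * r ^ 3 * s)
      = -(t * a * (r ^ 3 * s * (1 + a ^ 2))) := by rw [hε, hw]; ring
  have hDfact : 8 * r ^ 2 * (t * a * (ε * (1 - r) ^ 2 + a ^ 2 * r ^ 3 * s))
      = t * a * (r ^ 3 * s * (8 * (1 - r) ^ 2 + 8 * a ^ 2 * r ^ 2)) := by rw [hε]; ring
  rw [hNum, hDfact, abs_neg, abs_of_nonneg (by positivity)]
  have hkey : 1 + a ^ 2 ≤ 8 * (1 - r) ^ 2 + 8 * a ^ 2 * r ^ 2 := by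
    nlinarith [mul_le_mul ha1 ha1 ha0.le zero_le_one,
      mul_pos (show (0:ℝ) < 1 - 2 * r by linarith) (show (0:ℝ) < 3 - 2 * r by linarith),
      sq_nonneg (a * r)]
  have h4 := mul_le_mul_of_nonneg_left hkey (by positivity : (0:ℝ) ≤ r ^ 3 * s)
  have := mul_le_mul_of_nonneg_left h4 (by positivity : (0:ℝ) ≤ t * a)
  linarith

/-- pure algebra core, `n = 0` case. -/
lemma core_bound0 (r s t ε w : ℝ) (hs : 0 < s) (ht : t * t = s) (htpos : 0 < t)
    (hε : ε = r * s) (hw : w = s - 2 * (r * s)) (hr0 : 0 < r) (hr1 : 2 * r < 1) :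
    (ε * (r * t + r * t - 2 * t) + t ^ 3 ≠ 0) ∧
    |w * t / (ε * (r * t + r * t - 2 * t) + t ^ 3) - 1| ≤ 8 * r ^ 2 := by
  have hD : ε * (r * t + r * t - 2 * t) + t ^ 3 = t * (s * (2 * r ^ 2 - 2 * r + 1)) := by
    have h3 : t ^ 3 = (t * t) * t := by ring
    rw [h3, ht, hε]; ring
  have hq : 0 < 2 * r ^ 2 - 2 * r + 1 := by nlinarith [sq_nonneg (2 * r - 1)]
  have hDpos : 0 < ε * (r * t + r * t - 2 * t) + t ^ 3 := by rw [hD]; positivity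
  refine ⟨ne_of_gt hDpos, ?_⟩
  rw [div_sub_one (ne_of_gt hDpos), abs_div, abs_of_pos hDpos, div_le_iff₀ hDpos]
  rw [hD]
  have hNum : w * t - t * (s * (2 * r ^ 2 - 2 * r + 1)) = -(t * (s * (2 * r ^ 2))) := by
    rw [hw]; ring
  rw [hNum, abs_neg, abs_of_nonneg (by positivity)]
  have hkey : (2 : ℝ) ≤ 8 * (2 * r ^ 2 - 2 * r + 1) := by nlinarith [sq_nonneg (2 * r - 1)]
  have h5 := mul_le_mul_of_nonneg_left hkey (show (0:ℝ) ≤ t * (s * r ^ 2) by positivity)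
  nlinarith [h5]

/-- the bound for all `n ≥ 0`. -/
lemma key_bound (w ε : ℝ) (hw : 0 < w) (hε : 0 < ε) (n : ℤ) (hn : 0 ≤ n) :
    (ε * (qon w ε (n + 1) + qon w ε (n - 1) - 2 * qon w ε n) + (qon w ε n) ^ 3 ≠ 0) ∧
    |w * qon w ε n /
        (ε * (qon w ε (n + 1) + qon w ε (n - 1) - 2 * qon w ε n) + (qon w ε n) ^ 3) - 1|
      ≤ 8 * (ε / (w + 2 * ε)) ^ 2 := by
  have hs : 0 < w + 2 * ε := by linarith
  have htpos : 0 < Real.sqrt (w + 2 * ε) := Real.sqrt_pos.mpr hs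
  have ht : Real.sqrt (w + 2 * ε) * Real.sqrt (w + 2 * ε) = w + 2 * ε :=
    Real.mul_self_sqrt hs.le
  have hεr : ε = (ε / (w + 2 * ε)) * (w + 2 * ε) := by field_simp
  have hwr : w = (w + 2 * ε) - 2 * ((ε / (w + 2 * ε)) * (w + 2 * ε)) := by
    rw [← hεr]; ring
  have hr0 : 0 < ε / (w + 2 * ε) := div_pos hε hs
  have hr1 : 2 * (ε / (w + 2 * ε)) < 1 := by
    rw [show 2 * (ε / (w + 2 * ε)) = (2 * ε) / (w + 2 * ε) by ring, div_lt_one hs]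
    linarith
  obtain ⟨k, rfl⟩ := Int.eq_ofNat_of_zero_le hn
  cases k with
  | zero =>
    have e1 : ((0 : ℕ) : ℤ).natAbs = 0 := rfl
    have e2 : (((0 : ℕ) : ℤ) + 1).natAbs = 1 := rfl
    have e3 : (((0 : ℕ) : ℤ) - 1).natAbs = 1 := rfl
    simp only [qon, e1, e2, e3, pow_zero, pow_one, one_mul]
    exact core_bound0 _ _ _ _ _ hs ht htpos hεr hwr hr0 hr1
  | succ m =>
    have e1 : ((↑(m + 1) : ℤ)).natAbs = m + 1 := by omega
    have e2 : ((↑(m + 1) : ℤ) + 1).natAbs = m + 2 := by omega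
    have e3 : ((↑(m + 1) : ℤ) - 1).natAbs = m := by omega
    simp only [qon, e1, e2, e3]
    exact core_bound _ _ _ _ _ hs ht htpos hεr hwr hr0 hr1 m

/-- (i) `q_{n+1}/q_n = ρ/(1+2ρ)` for `n ≥ 0`, which tends to `0` as `ρ → 0+`;
(ii) `(q_n)` satisfies the stationary DNLS equation `w q_n = ε(q_{n+1}+q_{n−1}−2q_n) + q_n³`
asymptotically as `ρ = ε/w → 0`, uniformly in `n`. -/
theorem onsite_dnls_asymptotic :
    (∀ w ε : ℝ, 0 < w → 0 < ε → ∀ n : ℤ, 0 ≤ n →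
      qon w ε (n + 1) / qon w ε n = (ε / w) / (1 + 2 * (ε / w))) ∧
    Filter.Tendsto (fun ρ : ℝ => ρ / (1 + 2 * ρ))
      (nhdsWithin 0 (Set.Ioi 0)) (nhds 0) ∧
    (∀ η : ℝ, 0 < η → ∃ ρ₀ : ℝ, 0 < ρ₀ ∧
      ∀ w ε : ℝ, 0 < w → 0 < ε → ε / w < ρ₀ →
        ∀ n : ℤ,
          (ε * (qon w ε (n + 1) + qon w ε (n - 1) - 2 * qon w ε n) + (qon w ε n) ^ 3 ≠ 0) ∧
          |w * qon w ε n /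
              (ε * (qon w ε (n + 1) + qon w ε (n - 1) - 2 * qon w ε n) + (qon w ε n) ^ 3)
            - 1| ≤ η) := by
  refine ⟨?_, ?_, ?_⟩
  · intro w ε hw hε n hn
    have hs : 0 < w + 2 * ε := by linarith
    have htpos : 0 < Real.sqrt (w + 2 * ε) := Real.sqrt_pos.mpr hs
    have hr0 : 0 < ε / (w + 2 * ε) := div_pos hε hs
    obtain ⟨m, rfl⟩ := Int.eq_ofNat_of_zero_le hn
    have e1 : ((↑m : ℤ)).natAbs = m := by omega
    have e2 : ((↑m : ℤ) + 1).natAbs = m + 1 := by omega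
    have hrne : ε / (w + 2 * ε) ≠ 0 := ne_of_gt hr0
    rw [qon, qon, e1, e2, pow_succ,
      mul_div_mul_right _ _ (ne_of_gt htpos),
      mul_div_cancel_left₀ _ (pow_ne_zero m hrne)]
    field_simp
  · have hc : ContinuousAt (fun ρ : ℝ => ρ / (1 + 2 * ρ)) 0 := by
      apply ContinuousAt.div (by fun_prop) (by fun_prop)
      norm_num
    have h := hc.tendsto.mono_left (nhdsWithin_le_nhds (s := Set.Ioi (0:ℝ)))
    simpa using h
  · intro η hη
    refine ⟨Real.sqrt (η / 8), Real.sqrt_pos.mpr (by positivity), ?_⟩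
    intro w ε hw hε hρ n
    have hs : 0 < w + 2 * ε := by linarith
    have hρ0 : 0 < ε / w := div_pos hε hw
    have hle : ε / (w + 2 * ε) ≤ ε / w :=
      div_le_div_of_nonneg_left hε.le hw (by linarith)
    have hbound : 8 * (ε / (w + 2 * ε)) ^ 2 ≤ η := by
      have h1 : (ε / (w + 2 * ε)) ^ 2 ≤ (ε / w) ^ 2 :=
        pow_le_pow_left₀ (le_of_lt (div_pos hε hs)) hle 2
      have h2 : (ε / w) ^ 2 < Real.sqrt (η / 8) ^ 2 :=
        pow_lt_pow_left₀ hρ hρ0.le (by norm_num)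
      have h3 : Real.sqrt (η / 8) ^ 2 = η / 8 := Real.sq_sqrt (by positivity)
      nlinarith
    rcases le_or_gt 0 n with hn | hn
    · obtain ⟨h1, h2⟩ := key_bound w ε hw hε n hn
      exact ⟨h1, le_trans h2 hbound⟩
    · have hn' : 0 ≤ -n := by omega
      obtain ⟨h1, h2⟩ := key_bound w ε hw hε (-n) hn'
      have e1 : qon w ε (n + 1) = qon w ε (-n - 1) := by
        rw [← qon_neg w ε (-n - 1)]; congr 1; ring
      have e2 : qon w ε (n - 1) = qon w ε (-n + 1) := by
        rw [← qon_neg w ε (-n + 1)]; congr 1; ring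
      have e3 : qon w ε n = qon w ε (-n) := by
        rw [← qon_neg w ε (-n)]; congr 1; ring
      rw [e1, e2, e3]
      have comm : ε * (qon w ε (-n - 1) + qon w ε (-n + 1) - 2 * qon w ε (-n))
          = ε * (qon w ε (-n + 1) + qon w ε (-n - 1) - 2 * qon w ε (-n)) := by ring
      rw [comm]
      exact ⟨h1, le_trans h2 hbound⟩
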